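/- There exists a hard-attention transformer over the alphabet {a, b} (with suitable positional embeddings) that recognizes the language {aᵐbᵐ : m ≥ 0}: for every n ≥ 1 and every input x ∈ {a,b}ⁿ, its output is 1 if and only if n is even and x consists of n/2 copies of a followed by n/2 copies of b. -/
import Mathlib


open scoped Classical

/-- The smallest index attaining the maximum of a real-valued score function,
as used by hard (argmax) attention. -/
noncomputable def hardArgmax {n : ℕ} (hn : 0 < n) (f : Fin n → ℝ) : Fin n :=
  (Finset.univ.filter (fun j => ∀ j', f j' ≤ f j)).min' (by
    obtain ⟨j, -, hj⟩ := Finset.exists_max_image (Finset.univ : Finset (Fin n)) f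
      ⟨⟨0, hn⟩, Finset.mem_univ _⟩
    exact ⟨j, Finset.mem_filter.mpr
      ⟨Finset.mem_univ _, fun j' => hj j' (Finset.mem_univ _)⟩⟩)

/-- A hard-attention transformer over an alphabet `V`: `L` layers, `H` attention
heads per layer, arbitrary activation value types `Y 0, …, Y L`, layer-0 activations
computed from the input symbol and its position by `finp`, attention-score functions
`fatt` (here `fatt k` is the score function whose values feed layer `k+1`,
i.e. the paper's `f^att_{k+1,h}`), activation maps `fact`, and Boolean output map `g`. -/
structure HardTransformer (V : Type) where
  L : ℕ
  H : ℕ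
  Hpos : 0 < H
  Y : ℕ → Type
  finp : V → ℕ → Y 0
  fatt : (k : ℕ) → Fin H → Y k → Y k → ℝ
  fact : (k : ℕ) → Y k → (Fin H → Y k) → Y (k + 1)
  g : Y L → Bool

/-- Activations of a hard-attention transformer on input `x` of length `n > 0`:
`act hn x k i` is `y_i^{(k)}`.  Each head of layer `k+1` at position `i` attends to the
smallest position maximizing the attention score and retrieves its layer-`k` value. -/
noncomputable def HardTransformer.act {V : Type} (T : HardTransformer V) {n : ℕ}
    (hn : 0 < n) (x : Fin n → V) : (k : ℕ) → Fin n → T.Y k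
  | 0, i => T.finp (x i) (i.val + 1)
  | k + 1, i =>
      T.fact k (T.act hn x k i)
        (fun h => T.act hn x k
          (hardArgmax hn (fun j => T.fatt k h (T.act hn x k i) (T.act hn x k j))))

/-- The Boolean output of a hard-attention transformer: `g` applied to the last
position's top-layer activation `y_n^{(L)}`. -/
noncomputable def HardTransformer.output {V : Type} (T : HardTransformer V) {n : ℕ}
    (hn : 0 < n) (x : Fin n → V) : Bool :=
  T.g (T.act hn x T.L ⟨n - 1, Nat.sub_lt hn one_pos⟩)

/-- The two-letter alphabet `{a, b}`. -/
inductive ABSym : Type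
  | a : ABSym
  | b : ABSym
deriving DecidableEq

lemma hardArgmax_isMax {n : ℕ} (hn : 0 < n) (f : Fin n → ℝ) (j : Fin n) :
    f j ≤ f (hardArgmax hn f) := by
  have h : hardArgmax hn f ∈ Finset.univ.filter (fun j => ∀ j', f j' ≤ f j) :=
    Finset.min'_mem _ _
  exact (Finset.mem_filter.mp h).2 j

/-- A symbol at position `p` (1-indexed) is "bad" for length `nn` if it's a `b` in the
first half or an `a` in the second half. -/
def badB (nn : ℕ) (y : ABSym × ℕ) : Bool :=
  (decide (y.1 = ABSym.b) && decide (2 * y.2 ≤ nn)) ||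
    (decide (y.1 = ABSym.a) && decide (nn < 2 * y.2))

noncomputable def anbnT : HardTransformer ABSym where
  L := 1
  H := 1
  Hpos := one_pos
  Y := fun k => match k with | 0 => ABSym × ℕ | _ + 1 => Bool
  finp := fun s p => (s, p)
  fatt := fun k => match k with
    | 0 => fun _ (yi yj : ABSym × ℕ) => if badB yi.2 yj then (1 : ℝ) else 0
    | _ + 1 => fun _ _ _ => 0
  fact := fun k => match k with
    | 0 => fun (yi : ABSym × ℕ) (bs : Fin 1 → ABSym × ℕ) =>
        decide (Even yi.2) && !(badB yi.2 (bs 0))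
    | _ + 1 => fun y _ => y
  g := id

/-- **Hard-attention transformers can recognize `{aᵐbᵐ : m ≥ 0}`.**  There is a
hard-attention transformer over the alphabet `{a, b}` (with suitable positional
embeddings) whose output on any input `x ∈ {a,b}ⁿ` (`n ≥ 1`) is `1` if and only if
`n` is even and `x` consists of `n/2` copies of `a` followed by `n/2` copies of `b`. -/
theorem exists_hard_transformer_recognizing_anbn :
    ∃ T : HardTransformer ABSym,
      ∀ (n : ℕ) (hn : 0 < n) (x : Fin n → ABSym),
        (T.output hn x = true ↔
          ∃ m : ℕ, n = 2 * m ∧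
            ∀ i : Fin n, x i = (if i.val < m then ABSym.a else ABSym.b)) := by
  refine ⟨anbnT, fun n hn x => ?_⟩
  have hl1 : n - 1 + 1 = n := Nat.succ_pred_eq_of_pos hn
  have key : anbnT.output hn x =
      (decide (Even (n-1+1)) && !(badB (n-1+1)
        ((x (hardArgmax hn (fun j => if badB (n-1+1) (x j, j.val+1) then (1:ℝ) else 0))),
         (hardArgmax hn (fun j => if badB (n-1+1) (x j, j.val+1) then (1:ℝ) else 0)).val + 1))) := rfl
  rw [hl1] at key
  set f : Fin n → ℝ := fun j => if badB n (x j, j.val+1) then (1:ℝ) else 0 with hf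
  set q : Fin n := hardArgmax hn f with hq
  have hmax : ∀ j, f j ≤ f q := hardArgmax_isMax hn f
  have hbadiff : badB n (x q, q.val+1) = true ↔ ∃ j : Fin n, badB n (x j, j.val+1) = true := by
    constructor
    · exact fun h => ⟨q, h⟩
    · rintro ⟨j, hj⟩
      by_contra hqb
      have h1 := hmax j
      simp only [hf, hj, if_true] at h1
      rw [if_neg hqb] at h1
      norm_num at h1
  rw [key]
  simp only [Bool.and_eq_true, Bool.not_eq_true', decide_eq_true_eq]
  constructor
  · rintro ⟨heven, hnb⟩
    have hnobad : ∀ j : Fin n, badB n (x j, j.val+1) = false := by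
      intro j
      by_contra hj
      rw [Bool.not_eq_false] at hj
      have := hbadiff.mpr ⟨j, hj⟩
      rw [this] at hnb
      simp at hnb
    obtain ⟨m, hm⟩ := heven
    refine ⟨m, by omega, fun i => ?_⟩
    have hi := hnobad i
    simp only [badB, Bool.or_eq_false_iff, Bool.and_eq_false_iff,
      decide_eq_false_iff_not, Bool.not_eq_true] at hi
    by_cases hc : i.val < m
    · rw [if_pos hc]
      rcases hi.1 with h | h
      · cases hx : x i
        · rfl
        · exact absurd rfl (by rw [hx] at h; exact h)
      · exfalso; omega
    · rw [if_neg hc]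
      rcases hi.2 with h | h
      · cases hx : x i
        · exact absurd rfl (by rw [hx] at h; exact h)
        · rfl
      · exfalso; omega
  · rintro ⟨m, hnm, hx⟩
    have hnobad : ∀ j : Fin n, badB n (x j, j.val+1) = false := by
      intro j
      have := hx j
      by_cases hc : j.val < m
      · rw [if_pos hc] at this
        simp only [badB, this, Bool.or_eq_false_iff]
        constructor
        · simp
        · simp only [Bool.and_eq_false_iff, decide_eq_false_iff_not]
          right; omega
      · rw [if_neg hc] at this
        simp only [badB, this, Bool.or_eq_false_iff]
        constructor
        · simp only [Bool.and_eq_false_iff, decide_eq_false_iff_not]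
          right; omega
        · simp
    refine ⟨⟨m, by omega⟩, ?_⟩
    rw [(hnobad q : badB n (x q, q.val+1) = false)]
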